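/- arXiv:2108.09024 — 11 statements merged into one kernel-verified Lean document; each statement's English description precedes it below -/
import Mathlib

section
/- (Lemma 3.2, set-theoretic form.) Let ℓ ⊂ ℙ²(𝕜) be the line defined by a·x₀ + b·x₁ + c·x₂ = 0, where (a,b,c) ≠ (0,0,0). Then the set-theoretic intersection of ℓ with the curve Δ_X = {σ(x₀,x₁) = x₂^p} consists of exactly one point if and only if c = 0, i.e. if and only if ℓ passes through the point str = [0:0:1]. (Thus the 𝔸¹-lines in X are precisely the lines through the strange point str.) -/
/-!
Points of `ℓ ∩ Δ_X` are the lines in the affine cone over it, which is closed under scaling.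
If `c = 0`, then `(x₀, x₁)` is forced to be a multiple of `(b, -a)`, and since `x ↦ x ^ p` is
injective there is exactly one `x₂` over it. If `c ≠ 0`, eliminating `x₂` leaves a binary form of
degree `p` whose `x₀ x₁ ^ (p - 1)` coefficient is `c ^ p σ₁ ≠ 0`. It is therefore not the `p`-th
power of a linear form, which in characteristic `p` only involves `x₀ ^ p` and `x₁ ^ p`, so it has
two distinct zeros on `ℙ¹`.
-/

open Finset

namespace Projectivization

variable {K V : Type*} [DivisionRing K] [AddCommGroup V] [Module K V]

theorem rep_mk_mem_of_smul_mem {C : Set V} (hC : ∀ (t : K) (v : V), v ∈ C → t • v ∈ C) {v : V}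
    (hv : v ∈ C) (hv0 : v ≠ 0) : (mk K v hv0).rep ∈ C := by
  obtain ⟨u, hu⟩ := exists_smul_eq_mk_rep K v hv0
  rw [← hu, Units.smul_def]
  exact hC _ _ hv

theorem existsUnique_rep_mem_iff {C : Set V} (hC : ∀ (t : K) (v : V), v ∈ C → t • v ∈ C) :
    (∃! P : Projectivization K V, P.rep ∈ C) ↔ ∃ v ∈ C, v ≠ 0 ∧ ∀ w ∈ C, ∃ t : K, t • v = w := by
  constructor
  · rintro ⟨P, hP, huniq⟩
    refine ⟨P.rep, hP, P.rep_nonzero, fun w hw => ?_⟩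
    by_cases hw0 : w = 0
    · exact ⟨0, by rw [hw0, zero_smul]⟩
    have hwP : mk K w hw0 = mk K P.rep P.rep_nonzero := by
      rw [mk_rep]
      exact huniq _ (rep_mk_mem_of_smul_mem hC hw hw0)
    exact (mk_eq_mk_iff' K _ _ hw0 P.rep_nonzero).mp hwP
  · rintro ⟨v, hv, hv0, hgen⟩
    refine ⟨mk K v hv0, rep_mk_mem_of_smul_mem hC hv hv0, fun Q hQ => ?_⟩
    rw [← mk_rep Q, mk_eq_mk_iff' K _ _ Q.rep_nonzero hv0]
    exact hgen _ hQ

end Projectivization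

section LinearIndependent

variable {K V : Type*} [Field K]

theorem linearIndependent_pair_of_mul_sub_mul_ne_zero {ι : Type*} {x y : ι → K} (i j : ι)
    (h : x i * y j - x j * y i ≠ 0) : LinearIndependent K ![x, y] := by
  refine LinearIndependent.pair_iff.mpr fun s t hst => ?_
  have hi : s * x i + t * y i = 0 := by simpa using congrFun hst i
  have hj : s * x j + t * y j = 0 := by simpa using congrFun hst j
  have hs : s * (x i * y j - x j * y i) = 0 := by linear_combination y j * hi - y i * hj
  have ht : t * (x i * y j - x j * y i) = 0 := by linear_combination x i * hj - x j * hi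
  exact ⟨(mul_eq_zero.mp hs).resolve_right h, (mul_eq_zero.mp ht).resolve_right h⟩

variable [AddCommGroup V] [Module K V]

theorem not_linearIndependent_pair_of_forall_smul_eq {C : Set V} {v : V}
    (hv : ∀ w ∈ C, ∃ t : K, t • v = w) {w₁ w₂ : V} (hw₁ : w₁ ∈ C) (hw₂ : w₂ ∈ C) :
    ¬LinearIndependent K ![w₁, w₂] := by
  intro hli
  obtain ⟨t₁, rfl⟩ := hv w₁ hw₁
  obtain ⟨t₂, rfl⟩ := hv w₂ hw₂
  obtain ⟨ht₂, ht₁⟩ := LinearIndependent.pair_iff.mp hli t₂ (-t₁)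
    (by rw [smul_smul, smul_smul, mul_comm, neg_mul, neg_smul, add_neg_cancel])
  exact hli.ne_zero 0 (by simp [neg_eq_zero.mp ht₁])

end LinearIndependent

namespace Polynomial

theorem exists_isRoot_ne_of_natDegree_eq_char {k : Type*} [Field k] [IsAlgClosed k] {p : ℕ}
    [CharP k p] (hp : p.Prime) {g : k[X]} (hdeg : g.natDegree = p) (h1 : g.coeff 1 ≠ 0) :
    ∃ r₁ r₂ : k, r₁ ≠ r₂ ∧ g.IsRoot r₁ ∧ g.IsRoot r₂ := by
  have := Fact.mk hp
  by_contra! hsingle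
  have hsplit : g.Splits := IsAlgClosed.splits g
  obtain ⟨r, hr⟩ := IsAlgClosed.exists_root g (by
    rw [degree_eq_natDegree (fun h => by simp [h] at h1), hdeg]; exact_mod_cast hp.ne_zero)
  have hroots : g.roots = Multiset.replicate p r := by
    refine Multiset.eq_replicate.mpr ⟨hdeg ▸ (splits_iff_card_roots.mp hsplit), fun x hx => ?_⟩
    by_contra hxr
    exact hsingle x r hxr (isRoot_of_mem_roots hx) hr
  -- in characteristic `p`, `(X - C r) ^ p = X ^ p - C r ^ p` has no linear term
  have hg : g = C g.leadingCoeff * (X - C r) ^ p := by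
    conv_lhs => rw [hsplit.eq_prod_roots, hroots]
    rw [Multiset.map_replicate, Multiset.prod_replicate]
  apply h1
  rw [hg, sub_pow_char, coeff_C_mul, coeff_sub, coeff_X_pow, ← C_pow, coeff_C]
  simp [hp.one_lt.ne]

end Polynomial

section Boundary

open Polynomial

variable {k : Type*} (p : ℕ) (s : ℕ → k)

def boundaryForm [CommSemiring k] (x y : k) : k :=
  ∑ i ∈ Ioo 0 p, s i * x ^ i * y ^ (p - i)

theorem boundaryForm_mul_mul [CommSemiring k] (t x y : k) :
    boundaryForm p s (t * x) (t * y) = t ^ p * boundaryForm p s x y := by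
  rw [boundaryForm, boundaryForm, mul_sum]
  refine sum_congr rfl fun i hi => ?_
  have htp : t ^ p = t ^ i * t ^ (p - i) := by
    rw [← pow_add, Nat.add_sub_cancel' (mem_Ioo.mp hi).2.le]
  rw [htp, mul_pow, mul_pow]
  ring

theorem boundaryForm_one_zero [CommSemiring k] : boundaryForm p s 1 0 = 0 :=
  sum_eq_zero fun i hi => by rw [zero_pow (Nat.sub_ne_zero_of_lt (mem_Ioo.mp hi).2), mul_zero]

/-- The affine cone in `k³` over the intersection of the line `a x₀ + b x₁ + c x₂ = 0`
with the curve `σ(x₀, x₁) = x₂ ^ p`. -/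
def lineBoundaryCone [CommSemiring k] (a b c : k) : Set (Fin 3 → k) :=
  {v | a * v 0 + b * v 1 + c * v 2 = 0 ∧ boundaryForm p s (v 0) (v 1) = v 2 ^ p}

theorem smul_mem_lineBoundaryCone [CommRing k] (a b c t : k) (v : Fin 3 → k)
    (hv : v ∈ lineBoundaryCone p s a b c) : t • v ∈ lineBoundaryCone p s a b c := by
  obtain ⟨hline, hcurve⟩ := hv
  simp only [lineBoundaryCone, Set.mem_ofPred_eq, Pi.smul_apply, smul_eq_mul]
  refine ⟨by linear_combination t * hline, ?_⟩
  rw [boundaryForm_mul_mul, hcurve, mul_pow]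

theorem exists_mul_eq_of_mul_add_mul_eq_zero [Field k] {a b x y : k} (hab : a ≠ 0 ∨ b ≠ 0)
    (h : a * x + b * y = 0) : ∃ t, t * b = x ∧ t * -a = y := by
  rcases hab with ha | hb
  · refine ⟨-y / a, ?_, ?_⟩ <;> field_simp
    linear_combination -h
  · refine ⟨x / b, ?_, ?_⟩ <;> field_simp
    linear_combination -h

/-- For `c ≠ 0`, the roots `t` of this polynomial are the points `[t : 1 : -(a t + b) / c]` of
the intersection of the line with the curve. -/
noncomputable def lineBoundaryChartPoly [CommRing k] (a b c : k) : k[X] :=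
  C (c ^ p) * ∑ i ∈ Ioo 0 p, monomial i (s i) - (-(C a * X + C b)) ^ p

theorem eval_lineBoundaryChartPoly [CommRing k] (a b c t : k) :
    (lineBoundaryChartPoly p s a b c).eval t =
      c ^ p * boundaryForm p s t 1 - (-(a * t + b)) ^ p := by
  simp [lineBoundaryChartPoly, boundaryForm, eval_finsetSum]

theorem mem_lineBoundaryCone_of_isRoot [Field k] {a b c t : k} (hc : c ≠ 0)
    (ht : (lineBoundaryChartPoly p s a b c).IsRoot t) :
    ![t, 1, -(a * t + b) / c] ∈ lineBoundaryCone p s a b c := by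
  have hroot := ht.eq_zero
  rw [eval_lineBoundaryChartPoly] at hroot
  refine ⟨by simp; field_simp; ring, ?_⟩
  simp only [Matrix.cons_val_zero, Matrix.cons_val_one, Matrix.cons_val_two, Matrix.head_cons,
    Matrix.tail_cons]
  rw [div_pow, eq_div_iff (pow_ne_zero _ hc)]
  linear_combination hroot

theorem coeff_one_lineBoundaryChartPoly [CommRing k] [CharP k p] (hp : p.Prime) (a b c : k) :
    (lineBoundaryChartPoly p s a b c).coeff 1 = c ^ p * s 1 := by
  have := Fact.mk hp
  have hpow : (-(C a * X + C b)) ^ p = C ((-a) ^ p) * X ^ p + C ((-b) ^ p) := by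
    rw [neg_add, add_pow_char, ← neg_mul, ← C_neg, ← C_neg, mul_pow, C_pow, C_pow]
  rw [lineBoundaryChartPoly, hpow, coeff_sub, coeff_C_mul, finsetSum_coeff, coeff_add,
    coeff_C_mul_X_pow, coeff_C]
  simp [coeff_monomial, hp.one_lt, hp.one_lt.ne]

theorem natDegree_lineBoundaryChartPoly [Field k] (hp : 0 < p) {a : k} (b c : k) (ha : a ≠ 0) :
    (lineBoundaryChartPoly p s a b c).natDegree = p := by
  have hlin : ((-(C a * X + C b)) ^ p).natDegree = p := by
    rw [natDegree_pow, natDegree_neg, natDegree_linear ha, mul_one]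
  have hsum : (∑ i ∈ Ioo 0 p, monomial i (s i)).natDegree ≤ p - 1 :=
    natDegree_sum_le_of_forall_le _ _ fun i hi =>
      (natDegree_monomial_le _).trans (Nat.le_sub_one_of_lt (mem_Ioo.mp hi).2)
  have hlt : (C (c ^ p) * ∑ i ∈ Ioo 0 p, monomial i (s i)).natDegree
      < ((-(C a * X + C b)) ^ p).natDegree := by
    rw [hlin]
    exact ((natDegree_C_mul_le _ _).trans hsum).trans_lt (Nat.sub_lt hp one_pos)
  rw [lineBoundaryChartPoly, natDegree_sub_eq_right_of_natDegree_lt hlt, hlin]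

variable {p s}

theorem exists_generator_lineBoundaryCone_zero [Field k] [IsAlgClosed k] [CharP k p]
    (hp : p.Prime) {a b : k} (hab : a ≠ 0 ∨ b ≠ 0) :
    ∃ v ∈ lineBoundaryCone p s a b 0, v ≠ 0 ∧
      ∀ w ∈ lineBoundaryCone p s a b 0, ∃ t : k, t • v = w := by
  have := Fact.mk hp
  obtain ⟨l, hl⟩ := IsAlgClosed.exists_pow_nat_eq (boundaryForm p s b (-a)) hp.pos
  refine ⟨![b, -a, l], ⟨by simp [mul_comm], by simpa using hl.symm⟩, ?_, ?_⟩
  · intro h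
    have h0 : b = 0 := congrFun h 0
    have h1 : -a = 0 := congrFun h 1
    exact hab.elim (· (neg_eq_zero.mp h1)) (· h0)
  · rintro w ⟨hline, hcurve⟩
    obtain ⟨t, h0, h1⟩ := exists_mul_eq_of_mul_add_mul_eq_zero hab (by simpa using hline)
    have h2 : t * l = w 2 := frobenius_inj k p <| by
      rw [frobenius_def, frobenius_def, mul_pow, hl, ← boundaryForm_mul_mul, h0, h1, hcurve]
    refine ⟨t, funext fun i => ?_⟩
    fin_cases i <;> simp [h0, h1, h2]

theorem exists_linearIndependent_pair_mem_lineBoundaryCone [Field k] [IsAlgClosed k] [CharP k p]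
    (hp : p.Prime) (hs1 : s 1 ≠ 0) {a b c : k} (hc : c ≠ 0) :
    ∃ w₁ ∈ lineBoundaryCone p s a b c, ∃ w₂ ∈ lineBoundaryCone p s a b c,
      LinearIndependent k ![w₁, w₂] := by
  have hcoeff : (lineBoundaryChartPoly p s a b c).coeff 1 ≠ 0 := by
    rw [coeff_one_lineBoundaryChartPoly p s hp]
    exact mul_ne_zero (pow_ne_zero _ hc) hs1
  by_cases ha : a = 0
  · -- the chart misses the point `[1 : 0 : 0]`, which lies on both the line and the curve
    obtain ⟨r, hr⟩ := IsAlgClosed.exists_root (lineBoundaryChartPoly p s a b c)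
      (natDegree_pos_iff_degree_pos.mp (le_natDegree_of_ne_zero hcoeff)).ne'
    refine ⟨![1, 0, 0], ⟨by simp [ha], by simp [boundaryForm_one_zero, hp.ne_zero]⟩,
      _, mem_lineBoundaryCone_of_isRoot p s hc hr,
      linearIndependent_pair_of_mul_sub_mul_ne_zero 0 1 (by simp)⟩
  · obtain ⟨r₁, r₂, hne, h₁, h₂⟩ := Polynomial.exists_isRoot_ne_of_natDegree_eq_char hp
      (natDegree_lineBoundaryChartPoly p s hp.pos b c ha) hcoeff
    exact ⟨_, mem_lineBoundaryCone_of_isRoot p s hc h₁,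
      _, mem_lineBoundaryCone_of_isRoot p s hc h₂,
      linearIndependent_pair_of_mul_sub_mul_ne_zero 0 1 (by simpa [sub_eq_zero] using hne)⟩

end Boundary

theorem line_meets_boundary_in_one_point_iff_through_strange_point_general
    (p : ℕ) (hp : p.Prime) (𝕜 : Type*) [Field 𝕜] [IsAlgClosed 𝕜] [CharP 𝕜 p]
    (s : ℕ → 𝕜) (hs1 : s 1 = 1)
    (a b c : 𝕜) (habc : (a, b, c) ≠ (0, 0, 0)) :
    (∃! P : Projectivization 𝕜 (Fin 3 → 𝕜),
        a * P.rep 0 + b * P.rep 1 + c * P.rep 2 = 0 ∧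
        (∑ i ∈ Ioo 0 p, s i * P.rep 0 ^ i * P.rep 1 ^ (p - i)) = P.rep 2 ^ p)
      ↔ c = 0 := by
  change (∃! P : Projectivization 𝕜 (Fin 3 → 𝕜), P.rep ∈ lineBoundaryCone p s a b c) ↔ c = 0
  rw [Projectivization.existsUnique_rep_mem_iff (smul_mem_lineBoundaryCone p s a b c)]
  constructor
  · rintro ⟨v, -, -, hv⟩
    by_contra hc
    obtain ⟨w₁, hw₁, w₂, hw₂, hli⟩ :=
      exists_linearIndependent_pair_mem_lineBoundaryCone hp (hs1 ▸ one_ne_zero) hc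
    exact not_linearIndependent_pair_of_forall_smul_eq hv hw₁ hw₂ hli
  · rintro rfl
    refine exists_generator_lineBoundaryCone_zero hp ?_
    by_contra! hab
    exact habc (by rw [hab.1, hab.2])

/-- **Lemma 3.2, set-theoretic form.**  Let `p` be a prime, `𝕜` an
algebraically closed field of characteristic `p`, and `σ(A,B) = ∑_{i=1}^{p-1} σ_i A^i B^{p-i}`
with `σ_1 = σ_{p-1} = 1`.  Let `ℓ ⊂ ℙ²(𝕜)` be the line `a·x₀ + b·x₁ + c·x₂ = 0` with
`(a,b,c) ≠ (0,0,0)`.  Then `ℓ` meets the curve `Δ_X = {σ(x₀,x₁) = x₂^p}` in exactly one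
point if and only if `c = 0`, i.e. iff `ℓ` passes through the strange point `[0:0:1]`. -/
theorem line_meets_boundary_in_one_point_iff_through_strange_point
    (p : ℕ) (hp : p.Prime) (𝕜 : Type*) [Field 𝕜] [IsAlgClosed 𝕜] [CharP 𝕜 p]
    (s : ℕ → 𝕜) (hs1 : s 1 = 1) (hsp : s (p - 1) = 1)
    (a b c : 𝕜) (habc : (a, b, c) ≠ (0, 0, 0)) :
    (∃! P : Projectivization 𝕜 (Fin 3 → 𝕜),
        a * P.rep 0 + b * P.rep 1 + c * P.rep 2 = 0 ∧
        (∑ i ∈ Ioo 0 p, s i * P.rep 0 ^ i * P.rep 1 ^ (p - i)) = P.rep 2 ^ p)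
      ↔ c = 0 :=
  line_meets_boundary_in_one_point_iff_through_strange_point_general p hp 𝕜 s hs1 a b c habc
end

section
/- (Proposition 3.3, strangeness of 𝔸¹-curves, coordinate form.) Let f₀, f₁, f₂ ∈ 𝕜[t] be polynomials such that σ(f₀, f₁) − f₂^p is a nonzero constant (so that t ↦ [f₀(t):f₁(t):f₂(t)] defines a morphism 𝔸¹ → ℙ² avoiding Δ_X, i.e. an 𝔸¹-curve in X). Then f₀·f₁′ − f₀′·f₁ = 0 in 𝕜[t]. (The vanishing of this Wronskian says that every tangent line of the image curve passes through the strange point str = [0:0:1], i.e. the image is a strange curve with strange point str.) -/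
open Polynomial Finset

/-!
Write `σ(A, B) = ∑ σᵢ AⁱBᵖ⁻ⁱ` as the homogenization of `σ(X, 1)`. In characteristic `p`,
`d/dt (f₂ᵖ) = 0`, and the derivative of a binary `p`-form evaluated along `(f₀, f₁)` factors as
`∂σ/∂A (f₀, f₁)` (the homogenization of `σ'(X, 1)`) times the Wronskian `W(f₁, f₀)`, so
differentiating the hypothesis gives `∂σ/∂A (f₀, f₁) · W = 0`. The form `∂σ/∂A` is nonzero, since
its `Aᵖ⁻²` coefficient is `(p - 1) σₚ₋₁ = -1`. If `∂σ/∂A (f₀, f₁) = 0` and `f₁ ≠ 0`, then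
`f₀ / f₁ ∈ 𝕜(t)` is a root of the nonzero polynomial `σ'(X, 1)` over the algebraically closed
field `𝕜`, hence a constant, and the Wronskian of proportional polynomials vanishes.
-/

theorem IsAlgClosed.exists_algebraMap_eq_of_aeval_eq_zero {k K : Type*} [Field k] [IsAlgClosed k]
    [CommRing K] [IsDomain K] [Algebra k K] {q : k[X]} (hq : q ≠ 0) {x : K}
    (hx : aeval x q = 0) : ∃ r, algebraMap k K r = x := by
  have hroot : x ∈ (q.map (algebraMap k K)).roots := by
    rwa [mem_roots (Polynomial.map_ne_zero hq), IsRoot, eval_map_algebraMap]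
  rw [(IsAlgClosed.splits q).roots_map] at hroot
  obtain ⟨r, -, hr⟩ := Multiset.mem_map.mp hroot
  exact ⟨r, hr⟩

namespace Polynomial

section CharP

variable {R : Type*} [CommRing R] {p : ℕ} [CharP R p]

theorem derivative_pow_char_eq_zero (f : R[X]) : derivative (f ^ p) = 0 := by
  rw [derivative_pow, CharP.cast_eq_zero R p, map_zero, zero_mul, zero_mul]

theorem derivative_pow_mul_pow_sub_char {i : ℕ} (hi0 : 0 < i) (hip : i < p) (f g : R[X]) :
    derivative (f ^ i * g ^ (p - i)) =
      C (i : R) * f ^ (i - 1) * g ^ (p - 1 - i) * wronskian g f := by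
  have hpi : C ((p - i : ℕ) : R) = -C (i : R) := by
    rw [Nat.cast_sub hip.le, CharP.cast_eq_zero, zero_sub, map_neg]
  obtain ⟨j, rfl⟩ : ∃ j, i = j + 1 := ⟨i - 1, by omega⟩
  obtain ⟨k, hk⟩ : ∃ k, p - (j + 1) = k + 1 := ⟨p - 1 - (j + 1), by omega⟩
  rw [derivative_mul, derivative_pow, derivative_pow, hpi, hk, show p - 1 - (j + 1) = k by omega,
    wronskian]
  simp only [add_tsub_cancel_right, pow_succ]
  ring

theorem derivative_aeval_homogenize_C_mul_X_pow_char {i : ℕ} (hip : i ≤ p) (r : R)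
    (f g : R[X]) :
    derivative (MvPolynomial.aeval ![f, g] ((C r * X ^ i).homogenize p)) =
      MvPolynomial.aeval ![f, g] ((derivative (C r * X ^ i)).homogenize (p - 2)) *
        wronskian g f := by
  rw [derivative_C_mul_X_pow]
  simp only [homogenize_C_mul, homogenize_X_pow hip, map_mul, map_pow, MvPolynomial.aeval_C,
    MvPolynomial.aeval_X, algebraMap_eq, derivative_C_mul, Matrix.cons_val_zero,
    Matrix.cons_val_one]
  rcases i.eq_zero_or_pos with rfl | hi0
  · simp [derivative_pow_char_eq_zero]
  rcases hip.lt_or_eq with hip | rfl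
  · rw [mul_assoc, homogenize_C_mul, homogenize_C_mul, homogenize_X_pow (by omega),
      derivative_pow_mul_pow_sub_char hi0 hip, show p - 2 - (i - 1) = p - 1 - i by omega]
    simp only [map_mul, map_pow, MvPolynomial.algHom_C, algebraMap_eq, MvPolynomial.aeval_X,
      Matrix.cons_val_zero, Matrix.cons_val_one, map_natCast]
    ring
  · simp [derivative_pow_char_eq_zero]

/-- `homogenize` silently drops coefficients above the given degree; here the dropped
`X ^ (p - 1)`-coefficient of `derivative q` is `p * q.coeff p = 0`. -/
theorem derivative_aeval_homogenize_char {q : R[X]} (hq : q.natDegree ≤ p) (f g : R[X]) :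
    derivative (MvPolynomial.aeval ![f, g] (q.homogenize p)) =
      MvPolynomial.aeval ![f, g] ((derivative q).homogenize (p - 2)) * wronskian g f := by
  rw [q.as_sum_range_C_mul_X_pow' (Nat.lt_succ_of_le hq)]
  simp only [homogenize_finsetSum, map_sum, Finset.sum_mul]
  exact Finset.sum_congr rfl fun i hi =>
    derivative_aeval_homogenize_C_mul_X_pow_char (Nat.lt_succ_iff.mp (mem_range.mp hi)) _ f g

end CharP

theorem aeval_homogenize_sum_C_mul_X_pow {R : Type*} [CommRing R] {S : Finset ℕ} {n : ℕ}
    (hS : ∀ i ∈ S, i ≤ n) (a : ℕ → R) (f g : R[X]) :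
    MvPolynomial.aeval ![f, g] ((∑ i ∈ S, C (a i) * X ^ i).homogenize n) =
      ∑ i ∈ S, C (a i) * f ^ i * g ^ (n - i) := by
  simp only [homogenize_finsetSum, homogenize_C_mul, map_sum]
  refine Finset.sum_congr rfl fun i hi => ?_
  simp [homogenize_X_pow (hS i hi), mul_assoc]

theorem natDegree_sum_Ioo_C_mul_X_pow_le {R : Type*} [Semiring R] (n : ℕ) (a : ℕ → R) :
    (∑ i ∈ Ioo 0 n, C (a i) * X ^ i).natDegree ≤ n - 1 :=
  natDegree_sum_le_of_forall_le _ _ fun i hi =>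
    (natDegree_C_mul_X_pow_le _ _).trans (by have := mem_Ioo.mp hi; omega)

theorem derivative_sum_Ioo_C_mul_X_pow_ne_zero {K : Type*} [Field K] {p : ℕ} [CharP K p]
    (hp : 2 ≤ p) {a : ℕ → K} (ha : a (p - 1) ≠ 0) :
    derivative (∑ i ∈ Ioo 0 p, C (a i) * X ^ i) ≠ 0 := by
  have hcast : ((p - 2 : ℕ) : K) + 2 = 0 := by
    have : ((p - 2 + 2 : ℕ) : K) = 0 := by rw [Nat.sub_add_cancel hp, CharP.cast_eq_zero]
    exact_mod_cast this
  have hcoeff : (derivative (∑ i ∈ Ioo 0 p, C (a i) * X ^ i)).coeff (p - 2) = -a (p - 1) := by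
    rw [coeff_derivative, finsetSum_coeff, Finset.sum_eq_single (p - 1)]
    · rw [coeff_C_mul_X_pow, if_pos (by omega)]
      linear_combination a (p - 1) * hcast
    · intro i _ hi
      rw [coeff_C_mul_X_pow, if_neg (by omega)]
    · intro hp1
      exact absurd (mem_Ioo.mpr ⟨by omega, by omega⟩) hp1
  intro h
  rw [h, coeff_zero, eq_comm, neg_eq_zero] at hcoeff
  exact ha hcoeff

theorem exists_eq_C_mul_of_aeval_homogenize_eq_zero {k : Type*} [Field k] [IsAlgClosed k]
    {q : k[X]} (hq : q ≠ 0) {n : ℕ} (hn : q.natDegree ≤ n) {f g : k[X]} (hg : g ≠ 0)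
    (h : MvPolynomial.aeval ![f, g] (q.homogenize n) = 0) : ∃ r, f = C r * g := by
  let φ := IsScalarTower.toAlgHom k k[X] (RatFunc k)
  have hφ : Function.Injective φ := IsFractionRing.injective k[X] (RatFunc k)
  have hφg : φ g ≠ 0 := (map_ne_zero_iff φ hφ).mpr hg
  have hroot : aeval (φ f / φ g) q = 0 := by
    have h' := congrArg φ h
    rw [← AlgHom.comp_apply, MvPolynomial.comp_aeval, map_zero, MvPolynomial.aeval_eq_eval₂Hom,
      MvPolynomial.coe_eval₂Hom, ← MvPolynomial.eval_map, ← homogenize_map,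
      eval_homogenize (by rwa [natDegree_map]) _ (by simpa using hφg)] at h'
    simp only [Matrix.cons_val_zero, Matrix.cons_val_one, eval_map_algebraMap, mul_eq_zero,
      pow_eq_zero_iff', hφg, false_and, or_false] at h'
    exact h'
  obtain ⟨r, hr⟩ := IsAlgClosed.exists_algebraMap_eq_of_aeval_eq_zero hq hroot
  refine ⟨r, hφ ?_⟩
  rw [map_mul, ← algebraMap_eq, AlgHom.commutes, hr, div_mul_cancel₀ _ hφg]

theorem wronskian_C_mul_right_self {R : Type*} [CommRing R] (r : R) (f : R[X]) :
    wronskian f (C r * f) = 0 := by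
  rw [wronskian, derivative_C_mul]
  ring

end Polynomial

theorem wronskian_of_A1_curve_vanishes_general
    (p : ℕ) (hp : p.Prime) (𝕜 : Type*) [Field 𝕜] [IsAlgClosed 𝕜] [CharP 𝕜 p]
    (s : ℕ → 𝕜) (hsp : s (p - 1) = 1)
    (f₀ f₁ f₂ : Polynomial 𝕜) (c : 𝕜)
    (h : (∑ i ∈ Ioo 0 p, C (s i) * f₀ ^ i * f₁ ^ (p - i)) - f₂ ^ p = C c) :
    f₀ * derivative f₁ - derivative f₀ * f₁ = 0 := by
  set σ : 𝕜[X] := ∑ i ∈ Ioo 0 p, C (s i) * X ^ i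
  have hσdeg : σ.natDegree ≤ p - 1 := natDegree_sum_Ioo_C_mul_X_pow_le p s
  have hσ : MvPolynomial.aeval ![f₀, f₁] (σ.homogenize p) =
      ∑ i ∈ Ioo 0 p, C (s i) * f₀ ^ i * f₁ ^ (p - i) :=
    aeval_homogenize_sum_C_mul_X_pow (fun i hi => (mem_Ioo.mp hi).2.le) s f₀ f₁
  have hderiv : MvPolynomial.aeval ![f₀, f₁] ((derivative σ).homogenize (p - 2)) *
      wronskian f₁ f₀ = 0 := by
    have hd := congrArg derivative h
    rwa [derivative_sub, derivative_pow_char_eq_zero, sub_zero, derivative_C, ← hσ,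
      derivative_aeval_homogenize_char (hσdeg.trans (Nat.sub_le p 1))] at hd
  change wronskian f₀ f₁ = 0
  rw [← wronskian_neg_eq, neg_eq_zero]
  rcases mul_eq_zero.mp hderiv with hpolar | hW
  · rcases eq_or_ne f₁ 0 with rfl | hf₁
    · exact wronskian_zero_left f₀
    obtain ⟨r, rfl⟩ := exists_eq_C_mul_of_aeval_homogenize_eq_zero
      (derivative_sum_Ioo_C_mul_X_pow_ne_zero hp.two_le (hsp ▸ one_ne_zero))
      ((natDegree_derivative_le σ).trans (by omega)) hf₁ hpolar
    exact wronskian_C_mul_right_self r f₁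
  · exact hW

/-- **Proposition 3.3, strangeness of 𝔸¹-curves, coordinate form.**
Let `p` be a prime, `𝕜` an algebraically closed field of characteristic `p`, and
`σ(A,B) = ∑_{i=1}^{p-1} σ_i A^i B^{p-i}` with `σ_1 = σ_{p-1} = 1`.  If `f₀, f₁, f₂ ∈ 𝕜[t]`
satisfy that `σ(f₀,f₁) − f₂^p` is a nonzero constant (so `t ↦ [f₀:f₁:f₂]` is an
`𝔸¹`-curve avoiding `Δ_X`), then the Wronskian `f₀·f₁′ − f₀′·f₁` vanishes. -/
theorem wronskian_of_A1_curve_vanishes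
    (p : ℕ) (hp : p.Prime) (𝕜 : Type*) [Field 𝕜] [IsAlgClosed 𝕜] [CharP 𝕜 p]
    (s : ℕ → 𝕜) (hs1 : s 1 = 1) (hsp : s (p - 1) = 1)
    (f₀ f₁ f₂ : Polynomial 𝕜) (c : 𝕜) (hc : c ≠ 0)
    (h : (∑ i ∈ Ioo 0 p, C (s i) * f₀ ^ i * f₁ ^ (p - i)) - f₂ ^ p = C c) :
    f₀ * derivative f₁ - derivative f₀ * f₁ = 0 :=
  wronskian_of_A1_curve_vanishes_general p hp 𝕜 s hsp f₀ f₁ f₂ c h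
end

section
/- In the polynomial ring 𝕜[A,B] over a field 𝕜 of characteristic p (p prime), one has the identity Σ_{i=1}^{p−1} i·A^{i−1}·B^{p−1−i} = −(A − B)^{p−2}. (This computes the polynomial P of equation (4.12) for the special choice σ_i = 1 for all i, and is the key to the derivative formula for σ₀.) -/
open MvPolynomial Finset

/-! In characteristic `p` one has `(A - B)^p = A^p - B^p`, so dividing by `A - B` gives
`∑_{i<p} A^i B^{p-1-i} = (A - B)^{p-1}`. Differentiating with respect to `A` turns the left side
into the sum in question and the right side into `(p - 1)(A - B)^{p-2} = -(A - B)^{p-2}`. -/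

theorem geom_sum₂_eq_sub_pow_pred {R : Type*} [CommRing R] [IsDomain R] {p : ℕ} [Fact p.Prime]
    [CharP R p] (a b : R) : ∑ i ∈ range p, a ^ i * b ^ (p - 1 - i) = (a - b) ^ (p - 1) := by
  have hp : p.Prime := Fact.out
  rcases eq_or_ne a b with rfl | hab
  · have hterm : ∀ i ∈ range p, a ^ i * a ^ (p - 1 - i) = a ^ (p - 1) := fun i hi => by
      rw [← pow_add, Nat.add_sub_cancel' (Nat.le_sub_one_of_lt (mem_range.1 hi))]
    rw [sum_congr rfl hterm, sum_const, card_range, nsmul_eq_mul, CharP.cast_eq_zero, zero_mul,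
      sub_self, zero_pow (Nat.sub_ne_zero_of_lt hp.one_lt)]
  · refine mul_right_cancel₀ (sub_ne_zero.2 hab) ?_
    rw [geom_sum₂_mul, ← pow_succ, Nat.sub_add_cancel hp.one_le, sub_pow_char]

section pderiv

variable {R σ : Type*} [CommRing R] {i j : σ}

theorem pderiv_X_pow_mul_X_pow (hij : i ≠ j) (m n : ℕ) :
    pderiv i (X i ^ m * X j ^ n : MvPolynomial σ R) = C (m : R) * X i ^ (m - 1) * X j ^ n := by
  rw [pderiv_mul, pderiv_pow, pderiv_pow, pderiv_X_self, pderiv_X_of_ne hij.symm, ← C_eq_coe_nat]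
  ring

theorem pderiv_X_sub_X_pow (hij : i ≠ j) (n : ℕ) :
    pderiv i ((X i - X j) ^ n : MvPolynomial σ R) =
      (n : MvPolynomial σ R) * (X i - X j) ^ (n - 1) := by
  rw [pderiv_pow, map_sub, pderiv_X_self, pderiv_X_of_ne hij.symm, sub_zero, mul_one]

end pderiv

/-- Let `p` be a prime and `𝕜` a field of characteristic `p`.  In the
polynomial ring `𝕜[A,B]` one has `∑_{i=1}^{p-1} i·A^{i-1}·B^{p-1-i} = −(A − B)^{p-2}`. -/
theorem sum_eq_neg_sub_pow
    (p : ℕ) (hp : p.Prime) (𝕜 : Type*) [Field 𝕜] [CharP 𝕜 p] :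
    (∑ i ∈ Ioo 0 p, (C ((i : 𝕜)) : MvPolynomial (Fin 2) 𝕜) * X 0 ^ (i - 1) * X 1 ^ (p - 1 - i))
      = -(X 0 - X 1) ^ (p - 2) := by
  have : Fact p.Prime := ⟨hp⟩
  have h01 : (0 : Fin 2) ≠ 1 := by decide
  have hpred : ((p - 1 : ℕ) : MvPolynomial (Fin 2) 𝕜) = -1 := by
    rw [Nat.cast_sub hp.one_le, CharP.cast_eq_zero, Nat.cast_one, zero_sub]
  have hderiv :=
    congrArg (pderiv 0) (geom_sum₂_eq_sub_pow_pred (X 0 : MvPolynomial (Fin 2) 𝕜) (X 1))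
  rw [map_sum, sum_congr rfl fun i _ => pderiv_X_pow_mul_X_pow h01 i (p - 1 - i),
    pderiv_X_sub_X_pow h01, hpred, Nat.sub_sub, neg_one_mul] at hderiv
  rw [← hderiv, range_eq_Ico, sum_eq_sum_Ico_succ_bot hp.pos, Nat.cast_zero, C_0, zero_mul,
    zero_mul, zero_add, Ico_add_one_left_eq_Ioo]
end

section
/- (Theorem 4.1, classification of 𝔸¹-curves in Z, algebraic form.) Let u₀, u₁, …, u_p ∈ 𝕜[t] satisfy the binomial relations u_i·u_j = u_{i′}·u_{j′} for all indices 0 ≤ i, j, i′, j′ ≤ p with i + j = i′ + j′. Then there exist polynomials M, V, W ∈ 𝕜[t] such that u_i = M·V^{p−i}·W^i for every i = 0, 1, …, p. (A morphism 𝔸¹ → Z∖Δ_Z, where Z∖Δ_Z = Spec 𝕜[U₀,…,U_p]/(U_iU_j − U_{i′}U_{j′} : i+j = i′+j′) is the interior of the weighted projective plane Z = ℙ(1,1,p) with U_i = z₀^{p−i}z₁^i/z₂, is exactly such a tuple (u₀,…,u_p), so this is the statement that every 𝔸¹-curve in Z has a parameterization of the form (4.4).) -/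
/-- **Theorem 4.1, classification of 𝔸¹-curves in Z, algebraic form.**
Let `p` be a prime and `𝕜` an algebraically closed field of characteristic `p`.
If `u₀, …, u_p ∈ 𝕜[t]` satisfy the binomial relations `u_i·u_j = u_{i'}·u_{j'}` whenever
`i + j = i' + j'` (all indices between `0` and `p`), then there exist `M, V, W ∈ 𝕜[t]`
with `u_i = M·V^{p-i}·W^i` for every `i = 0, …, p`. -/
theorem A1_curves_in_Z_parameterization
    (p : ℕ) (hp : p.Prime) (𝕜 : Type*) [Field 𝕜] [IsAlgClosed 𝕜] [CharP 𝕜 p]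
    (u : ℕ → Polynomial 𝕜)
    (hrel : ∀ i j i' j' : ℕ, i ≤ p → j ≤ p → i' ≤ p → j' ≤ p → i + j = i' + j' →
      u i * u j = u i' * u j') :
    ∃ M V W : Polynomial 𝕜, ∀ i ≤ p, u i = M * V ^ (p - i) * W ^ i := by
  have hp2 : 2 ≤ p := hp.two_le
  by_cases h0 : u 0 = 0
  · -- then u i = 0 for all i < p
    have key : ∀ i, i < p → u i = 0 := by
      intro i
      induction i with
      | zero => intro _; exact h0
      | succ n ih =>
        intro h
        have hn : u n = 0 := ih (Nat.lt_of_succ_lt h)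
        have hrel' : u (n+1) * u (n+1) = u n * u (n+2) :=
          hrel (n+1) (n+1) n (n+2) (le_of_lt h) (le_of_lt h)
            (le_of_lt (Nat.lt_of_succ_lt h)) h (by ring)
        have : u (n+1) * u (n+1) = 0 := by rw [hrel', hn, zero_mul]
        exact mul_self_eq_zero.mp this
    refine ⟨u p, 0, 1, fun i hi => ?_⟩
    rcases eq_or_lt_of_le hi with rfl | hlt
    · simp
    · rw [key i hlt, zero_pow (by omega), one_pow, mul_zero, zero_mul]
  by_cases hP : u p = 0
  · -- then u i = 0 for all 0 < i ≤ p
    have key : ∀ k, k < p → u (p - k) = 0 := by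
      intro k
      induction k with
      | zero => intro _; simpa using hP
      | succ n ih =>
        intro h
        have hn : u (p - n) = 0 := ih (Nat.lt_of_succ_lt h)
        have hrel' : u (p - (n+1)) * u (p - (n+1)) = u (p - n) * u (p - (n+2)) :=
          hrel (p - (n+1)) (p - (n+1)) (p - n) (p - (n+2)) (by omega) (by omega)
            (by omega) (by omega) (by omega)
        have : u (p - (n+1)) * u (p - (n+1)) = 0 := by rw [hrel', hn, zero_mul]
        exact mul_self_eq_zero.mp this
    refine ⟨u 0, 1, 0, fun i hi => ?_⟩
    rcases Nat.eq_zero_or_pos i with rfl | hpos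
    · simp
    · have := key (p - i) (by omega)
      rw [show p - (p - i) = i by omega] at this
      rw [this, zero_pow (by omega), one_pow, mul_one, mul_zero]
  -- main case: u 0 ≠ 0 and u p ≠ 0
  classical
  letI : GCDMonoid (Polynomial 𝕜) := EuclideanDomain.gcdMonoid _
  set g := GCDMonoid.gcd (u 0) (u 1) with hg
  have hgdvd0 : g ∣ u 0 := gcd_dvd_left _ _
  have hgdvd1 : g ∣ u 1 := gcd_dvd_right _ _
  have hgne : g ≠ 0 := fun h => h0 (by simpa [h] using hgdvd0)
  set A := u 0 / g with hA
  set B := u 1 / g with hB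
  have hu0 : g * A = u 0 := EuclideanDomain.mul_div_cancel' hgne hgdvd0
  have hu1 : g * B = u 1 := EuclideanDomain.mul_div_cancel' hgne hgdvd1
  have hAne : A ≠ 0 := fun h => h0 (by rw [← hu0, h, mul_zero])
  have hcop : IsCoprime A B := by
    have h1 : u 1 ≠ 0 := by
      intro h1
      have : u 1 * u (p - 1) = u 0 * u p :=
        hrel 1 (p-1) 0 p (by omega) (by omega) (by omega) le_rfl (by omega)
      rw [h1, zero_mul] at this
      exact mul_ne_zero h0 hP this.symm
    exact isCoprime_div_gcd_div_gcd h1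
  -- key relation: u i * u 0 ^ i = u 1 ^ i * u 0 for i ≤ p
  have key : ∀ i, i ≤ p → u i * u 0 ^ i = u 1 ^ i * u 0 := by
    intro i
    induction i with
    | zero => intro _; ring
    | succ n ih =>
      intro h
      have hn := ih (le_of_lt h)
      have hstep : u (n+1) * u 0 = u n * u 1 :=
        hrel (n+1) 0 n 1 h (by omega) (le_of_lt h) (by omega) (by ring)
      calc u (n+1) * u 0 ^ (n+1) = (u (n+1) * u 0) * u 0 ^ n := by ring
        _ = u n * u 1 * u 0 ^ n := by rw [hstep]
        _ = u 1 * (u n * u 0 ^ n) := by ring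
        _ = u 1 * (u 1 ^ n * u 0) := by rw [hn]
        _ = u 1 ^ (n+1) * u 0 := by ring
  -- cancel powers of g : u i * A ^ i = B ^ i * g * A
  have key2 : ∀ i, i ≤ p → u i * A ^ i = B ^ i * g * A := by
    intro i hi
    have := key i hi
    rw [← hu0, ← hu1] at this
    have hcanc : g ^ i ≠ 0 := pow_ne_zero _ hgne
    apply mul_left_cancel₀ hcanc
    calc g ^ i * (u i * A ^ i) = u i * (g * A) ^ i := by ring
      _ = (g * B) ^ i * (g * A) := this
      _ = g ^ i * (B ^ i * g * A) := by ring
  -- A ^ (p-1) divides g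
  have hdvd : A ^ (p - 1) ∣ g := by
    have hkp := key2 p le_rfl
    have : u p * A ^ (p - 1) = B ^ p * g := by
      apply mul_left_cancel₀ hAne
      calc A * (u p * A ^ (p-1)) = u p * (A ^ 1 * A ^ (p-1)) := by ring
        _ = u p * A ^ p := by rw [← pow_add, show 1 + (p-1) = p by omega]
        _ = B ^ p * g * A := hkp
        _ = A * (B ^ p * g) := by ring
    have hdvd' : A ^ (p - 1) ∣ B ^ p * g := ⟨u p, by rw [← this]; ring⟩
    exact (IsCoprime.pow hcop (m := p - 1) (n := p)).dvd_of_dvd_mul_left hdvd'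
  obtain ⟨M, hM⟩ := hdvd
  refine ⟨M, A, B, fun i hi => ?_⟩
  have hAi : A ^ i ≠ 0 := pow_ne_zero _ hAne
  apply mul_right_cancel₀ hAi
  calc u i * A ^ i = B ^ i * g * A := key2 i hi
    _ = B ^ i * (A ^ (p-1) * M) * A := by rw [hM]
    _ = M * (A ^ (p - i) * A ^ i) * B ^ i := by
        rw [← pow_add, show p - i + i = (p-1)+1 by omega, pow_succ]; ring
    _ = M * A ^ (p - i) * B ^ i * A ^ i := by ring
end

section
/- (Corollary 4.4, well-definedness identity.) For any polynomials M, V, W ∈ 𝕜[t], one has σ(M·V^p, M·W^p) − (M·σ^{1/p}(V,W) − 1)^p = 1 in 𝕜[t]. (Consequently the triple x₀(t) = M·V^p, x₁(t) = M·W^p, x₂(t) = M·σ^{1/p}(V,W) − 1 has no common zero and defines a morphism 𝔸¹ → ℙ² whose image avoids Δ_X.) -/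
open Polynomial Finset

/-- Frobenius is additive, and homogeneity of degree `p` absorbs the factor `M ^ p`. -/
theorem pow_char_mul_sum_eq_sum_mul_pow {R : Type*} [CommRing R] (p : ℕ) [ExpChar R p]
    (S : Finset ℕ) (hS : ∀ i ∈ S, i ≤ p) (s τ : ℕ → R) (hτ : ∀ i, τ i ^ p = s i)
    (M V W : R) :
    (M * ∑ i ∈ S, τ i * V ^ i * W ^ (p - i)) ^ p
      = ∑ i ∈ S, s i * (M * V ^ p) ^ i * (M * W ^ p) ^ (p - i) := by
  rw [mul_pow, sum_pow_char, mul_sum]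
  refine sum_congr rfl fun i hi => ?_
  have hM : M ^ p = M ^ i * M ^ (p - i) := by rw [← pow_add, Nat.add_sub_cancel' (hS i hi)]
  rw [mul_pow, mul_pow, hτ, hM]
  ring

/-- **Corollary 4.4, well-definedness identity.**  Let `p` be a prime and `𝕜`
a (perfect) field of characteristic `p`, with `σ_i ∈ 𝕜` and `p`-th roots `τ i` (so
`τ i ^ p = σ_i`).  For any `M, V, W ∈ 𝕜[t]`,
`σ(M·V^p, M·W^p) − (M·σ^{1/p}(V,W) − 1)^p = 1`. -/
theorem parameterization_avoids_boundary
    (p : ℕ) (hp : p.Prime) (𝕜 : Type*) [Field 𝕜] [CharP 𝕜 p]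
    (s τ : ℕ → 𝕜) (hτ : ∀ i, τ i ^ p = s i)
    (M V W : Polynomial 𝕜) :
    (∑ i ∈ Ioo 0 p, C (s i) * (M * V ^ p) ^ i * (M * W ^ p) ^ (p - i)) -
      (M * (∑ i ∈ Ioo 0 p, C (τ i) * V ^ i * W ^ (p - i)) - 1) ^ p
      = 1 := by
  have : ExpChar (Polynomial 𝕜) p := ExpChar.prime hp
  have hσ := pow_char_mul_sum_eq_sum_mul_pow p (Ioo 0 p) (fun i hi => (mem_Ioo.mp hi).2.le)
    (fun i => C (s i)) (fun i => C (τ i)) (fun i => by rw [← C_pow, hτ]) M V W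
  rw [sub_pow_expChar, one_pow, ← hσ, sub_sub_cancel]
end

section
/- (Classification of 𝔸¹-curves in X; Proposition 2.3 combined with Theorem 4.1 and Corollary 4.4.) Let f₀, f₁, f₂ ∈ 𝕜[t] be polynomials such that σ(f₀, f₁) − f₂^p = 1. Then there exist polynomials M, V, W ∈ 𝕜[t] such that f₀ = M·V^p, f₁ = M·W^p, and f₂ = M·σ^{1/p}(V,W) − 1. (That is, every 𝔸¹-curve in X = (ℙ², Δ_X), normalized so that the defining value of Δ_X along it equals 1, arises from the parameterization (4.4) via the inseparable cover Z → X.) -/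
open Polynomial Finset

/-!
Write `f₀ = M a`, `f₁ = M b` with `a, b` coprime. Then `(f₂ + 1)^p = σ(f₀, f₁) = M^p σ(a, b)`,
so `σ(a, b)` has zero derivative. In characteristic `p` this derivative factors as
`P(a, b) · (a'b - ab')` with the cofactor `P(a, b) = ∑ i σ_i a^(i-1) b^(p-1-i)`. If `P(a, b) = 0`, then since
`σ_1 = σ_(p-1) = 1` the coprime `a, b` are units; if the Wronskian vanishes, coprimality gives
`a' = b' = 0`. Either way `a = V^p`, `b = W^p` over the perfect field `𝕜`, and extracting `p`-th
roots from `(f₂ + 1)^p = (M σ^(1/p)(V, W))^p` gives `f₂`.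
-/

section SigmaForm

variable {R : Type*} [CommRing R]

lemma dvd_of_sum_eq_zero {ι : Type*} [DecidableEq ι] {s : Finset ι} {f : ι → R} {x : R} {j : ι}
    (hj : j ∈ s) (h : ∑ i ∈ s, f i = 0) (hx : ∀ i ∈ s, i ≠ j → x ∣ f i) : x ∣ f j := by
  rw [← add_sum_erase s f hj] at h
  have hrest : x ∣ ∑ i ∈ s.erase j, f i :=
    dvd_sum fun i hi => hx i (mem_of_mem_erase hi) (ne_of_mem_erase hi)
  exact (dvd_add_left hrest).mp (h ▸ dvd_zero x)

def sigmaForm (p : ℕ) (c : ℕ → R) (A B : R) : R :=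
  ∑ i ∈ Ioo 0 p, c i * A ^ i * B ^ (p - i)

lemma sigmaForm_mul_mul (p : ℕ) (c : ℕ → R) (M A B : R) :
    sigmaForm p c (M * A) (M * B) = M ^ p * sigmaForm p c A B := by
  rw [sigmaForm, sigmaForm, mul_sum]
  refine sum_congr rfl fun i hi => ?_
  calc c i * (M * A) ^ i * (M * B) ^ (p - i)
        = M ^ (i + (p - i)) * (c i * A ^ i * B ^ (p - i)) := by ring
    _ = _ := by rw [Nat.add_sub_cancel' (mem_Ioo.mp hi).2.le]

lemma sigmaForm_pow_char (p : ℕ) [ExpChar R p] (c : ℕ → R) (A B : R) :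
    sigmaForm p c A B ^ p = sigmaForm p (fun i => c i ^ p) (A ^ p) (B ^ p) := by
  rw [sigmaForm, sum_pow_char]
  refine sum_congr rfl fun i _ => ?_
  ring

lemma derivative_sigmaForm (p : ℕ) [CharP R p] (s : ℕ → R) (a b : R[X]) :
    derivative (sigmaForm p (fun i => C (s i)) a b) =
      (∑ i ∈ Ioo 0 p, (i : R[X]) * C (s i) * a ^ (i - 1) * b ^ (p - i - 1)) * wronskian b a := by
  rw [sigmaForm, derivative_sum, sum_mul]
  refine sum_congr rfl fun i hi => ?_
  obtain ⟨hi0, hip⟩ := mem_Ioo.mp hi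
  have hpi : ((p - i : ℕ) : R[X]) = -(i : R[X]) := by
    rw [Nat.cast_sub hip.le, CharP.cast_eq_zero, zero_sub]
  have ha : a ^ i = a ^ (i - 1) * a := by rw [← pow_succ, Nat.sub_add_cancel hi0]
  have hb : b ^ (p - i) = b ^ (p - i - 1) * b := by rw [← pow_succ, Nat.sub_add_cancel (by omega)]
  simp only [derivative_mul, derivative_C, derivative_pow, map_natCast, hpi, wronskian]
  rw [ha, hb]
  ring

lemma isUnit_of_cofactor_eq_zero {p : ℕ} [Fact p.Prime] [CharP R p] {c : ℕ → R} (hc1 : c 1 = 1)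
    (hcp : c (p - 1) = 1) {a b : R} (hab : IsCoprime a b)
    (h : ∑ i ∈ Ioo 0 p, (i : R) * c i * a ^ (i - 1) * b ^ (p - i - 1) = 0) :
    IsUnit a ∧ IsUnit b := by
  have hp : 1 < p := (Fact.out : p.Prime).one_lt
  -- Apart from the terms `i = 1` and `i = p - 1`, which are `b^(p-2)` and `-a^(p-2)`, every
  -- summand is divisible by `a`, resp. by `b`.
  have ha : a ∣ b ^ (p - 2) := by
    have := dvd_of_sum_eq_zero (j := 1) (mem_Ioo.mpr ⟨one_pos, hp⟩) h fun i hi hi1 =>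
      ((dvd_pow_self a (by grind)).mul_left _).mul_right _
    simpa [hc1, show p - 1 - 1 = p - 2 by omega] using this
  have hb : b ∣ a ^ (p - 2) := by
    have := dvd_of_sum_eq_zero (j := p - 1) (mem_Ioo.mpr ⟨by omega, by omega⟩) h fun i hi hip =>
      (dvd_pow_self b (by grind)).mul_left _
    simpa [hcp, Nat.cast_sub hp.le, show p - 1 - 1 = p - 2 by omega,
      show p - (p - 1) - 1 = 0 by omega] using this
  exact ⟨hab.pow_right.isUnit_of_dvd' dvd_rfl ha, hab.symm.pow_right.isUnit_of_dvd' dvd_rfl hb⟩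

end SigmaForm

lemma derivative_pow_char {R : Type*} [CommRing R] (p : ℕ) [CharP R p] (f : R[X]) :
    derivative (f ^ p) = 0 := by
  simp [derivative_pow]

lemma derivative_eq_zero_of_pow_eq_pow_mul {R : Type*} [CommRing R] [IsDomain R] {p : ℕ}
    [CharP R p] {g M S : R[X]} (hM : M ≠ 0) (h : g ^ p = M ^ p * S) : derivative S = 0 := by
  have := congrArg derivative h
  rw [derivative_pow_char, derivative_mul, derivative_pow_char, zero_mul, zero_add] at this
  exact (mul_eq_zero.mp this.symm).resolve_left (pow_ne_zero p hM)

lemma exists_eq_pow_of_derivative_eq_zero {R : Type*} [CommRing R] [IsDomain R] (p : ℕ)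
    [ExpChar R p] [PerfectRing R p] {f : R[X]} (hf : derivative f = 0) : ∃ g, f = g ^ p :=
  ⟨_, (expand_contract' p hf).symm.trans (polynomial_expand_eq R p _)⟩

lemma exists_eq_mul_isCoprime {R : Type*} [CommRing R] [IsDomain R] [IsPrincipalIdealRing R]
    [GCDMonoid R] (x y : R) : ∃ d a b, x = d * a ∧ y = d * b ∧ IsCoprime a b := by
  obtain ⟨a, b, hx, hy, hab⟩ := extract_gcd x y
  exact ⟨gcd x y, a, b, hx, hy, (gcd_isUnit_iff a b).mp hab⟩

section Field

variable {K : Type*} [Field K] {p : ℕ} [Fact p.Prime] [CharP K p] {s : ℕ → K}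

lemma derivative_eq_zero_of_derivative_sigmaForm_eq_zero (hs1 : s 1 = 1) (hsp : s (p - 1) = 1)
    {a b : K[X]} (hab : IsCoprime a b) (h : derivative (sigmaForm p (fun i => C (s i)) a b) = 0) :
    derivative a = 0 ∧ derivative b = 0 := by
  rcases mul_eq_zero.mp (derivative_sigmaForm p s a b ▸ h) with hcofactor | hw
  · obtain ⟨ha, hb⟩ := isUnit_of_cofactor_eq_zero (by simp [hs1]) (by simp [hsp]) hab hcofactor
    exact ⟨derivative_of_natDegree_zero (natDegree_eq_zero_of_isUnit ha),
      derivative_of_natDegree_zero (natDegree_eq_zero_of_isUnit hb)⟩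
  · exact (hab.symm.wronskian_eq_zero_iff.mp hw).symm

lemma exists_eq_mul_pow_of_sigmaForm_eq_pow [PerfectRing K p] (hs1 : s 1 = 1)
    (hsp : s (p - 1) = 1) {f₀ f₁ g : K[X]} (h : sigmaForm p (fun i => C (s i)) f₀ f₁ = g ^ p) :
    ∃ M V W : K[X], f₀ = M * V ^ p ∧ f₁ = M * W ^ p := by
  classical
  obtain ⟨M, a, b, rfl, rfl, hab⟩ := exists_eq_mul_isCoprime f₀ f₁
  rcases eq_or_ne M 0 with rfl | hM
  · exact ⟨0, 0, 0, by simp, by simp⟩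
  rw [sigmaForm_mul_mul] at h
  obtain ⟨ha, hb⟩ := derivative_eq_zero_of_derivative_sigmaForm_eq_zero hs1 hsp hab
    (derivative_eq_zero_of_pow_eq_pow_mul hM h.symm)
  obtain ⟨V, rfl⟩ := exists_eq_pow_of_derivative_eq_zero p ha
  obtain ⟨W, rfl⟩ := exists_eq_pow_of_derivative_eq_zero p hb
  exact ⟨M, V, W, rfl, rfl⟩

end Field

/-- **classification of 𝔸¹-curves in X.**  Let `p` be a prime and `𝕜` an
algebraically closed field of characteristic `p`.  Fix `σ_i ∈ 𝕜` with `σ_1 = σ_{p-1} = 1`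
and `p`-th roots `τ i` (so `τ i ^ p = σ_i`).  If `f₀, f₁, f₂ ∈ 𝕜[t]` satisfy
`σ(f₀, f₁) − f₂^p = 1`, then there exist `M, V, W ∈ 𝕜[t]` with `f₀ = M·V^p`,
`f₁ = M·W^p`, and `f₂ = M·σ^{1/p}(V,W) − 1`. -/
theorem A1_curves_in_X_parameterization
    (p : ℕ) (hp : p.Prime) (𝕜 : Type*) [Field 𝕜] [IsAlgClosed 𝕜] [CharP 𝕜 p]
    (s τ : ℕ → 𝕜) (hs1 : s 1 = 1) (hsp : s (p - 1) = 1) (hτ : ∀ i, τ i ^ p = s i)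
    (f₀ f₁ f₂ : Polynomial 𝕜)
    (h : (∑ i ∈ Ioo 0 p, C (s i) * f₀ ^ i * f₁ ^ (p - i)) - f₂ ^ p = 1) :
    ∃ M V W : Polynomial 𝕜,
      f₀ = M * V ^ p ∧ f₁ = M * W ^ p ∧
      f₂ = M * (∑ i ∈ Ioo 0 p, C (τ i) * V ^ i * W ^ (p - i)) - 1 := by
  have := Fact.mk hp
  have hσ : sigmaForm p (fun i => C (s i)) f₀ f₁ = (f₂ + 1) ^ p := by
    rw [add_pow_char, one_pow]
    exact eq_add_of_sub_eq' h
  obtain ⟨M, V, W, rfl, rfl⟩ := exists_eq_mul_pow_of_sigmaForm_eq_pow hs1 hsp hσ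
  refine ⟨M, V, W, rfl, rfl, eq_sub_of_add_eq (frobenius_inj 𝕜[X] p ?_)⟩
  change (f₂ + 1) ^ p = (M * sigmaForm p (fun i => C (τ i)) V W) ^ p
  simp only [← hσ, sigmaForm_mul_mul, mul_pow, sigmaForm_pow_char, ← C_pow, hτ]
end

section
/- (Proposition 4.1, the defining equation of 𝔸¹-curves in the component 𝒜_{pd,d−p}(X).) Let m ≥ 0 and d = m + p. Fix α₁, …, α_m, β₀, β₁, γ₀, γ₁ ∈ 𝕜 and set M = Π_{j=1}^m (t + α_j) (with M = 1 if m = 0), V = β₀ + β₁t, W = γ₀ + γ₁t, and the parameterization x₀(t) = M·V^p, x₁(t) = M·W^p, x₂(t) = M·σ^{1/p}(V,W) − 1. Set b_k = β_k^p, c_k = γ_k^p (k = 0,1), π = b₁c₀ − b₀c₁, and L_k(t) = c_k·x₀(t) − b_k·x₁(t). Then in 𝕜[t] one has L₁(t)^d = (−1)^d · π^p · (σ(x₀(t), x₁(t)) − x₂(t)^p) · Π_{j=1}^m (L₀(t) − α_j^p·L₁(t)). (Hence the image of this 𝔸¹-curve satisfies the equation L₁^d − (−1)^d π^p Δ_X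 Π_{j=1}^{d−p}(L₀ − a_j^p L₁) = 0 with a_j^p = α_j^p.) -/
open Polynomial Finset

/-!
Everything is forced by the Frobenius `y ↦ y ^ p` being additive. It collapses the linear forms
`L₁` and `L₀` to `-π·M` and `π·M·t^p`, so `L₀ - α_j^p·L₁ = π·M·(t + α_j)^p` and the product over
`j` equals `π^m·M^(m+p)`. Since `σ` is homogeneous of degree `p` and `τ_i^p = σ_i`, it also gives
`x₂^p = σ(x₀, x₁) - 1`, so the boundary factor is `1`. Both sides are then
`(-π)^(m+p)·M^(m+p)`.
-/

theorem sum_mul_pow_mul_pow_sub {R : Type*} [CommRing R] {n : ℕ} (S : Finset ℕ)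
    (hS : ∀ i ∈ S, i ≤ n) (a : ℕ → R) (M x y : R) :
    ∑ i ∈ S, a i * (M * x) ^ i * (M * y) ^ (n - i) =
      M ^ n * ∑ i ∈ S, a i * x ^ i * y ^ (n - i) := by
  rw [mul_sum]
  refine sum_congr rfl fun i hi => ?_
  rw [← Nat.add_sub_cancel' (hS i hi), pow_add, Nat.add_sub_cancel_left]
  ring

section CharP

variable {R : Type*} [CommRing R] (p : ℕ) [Fact p.Prime] [CharP R p]

theorem mul_sub_mul_pow_char (M V W c b : R) :
    c ^ p * (M * V ^ p) - b ^ p * (M * W ^ p) = M * (c * V - b * W) ^ p := by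
  rw [sub_pow_char, mul_pow, mul_pow]
  ring

theorem sum_mul_pow_mul_pow_sub_pow_char (S : Finset ℕ) (a : ℕ → R) (n : ℕ) (x y : R) :
    (∑ i ∈ S, a i * x ^ i * y ^ (n - i)) ^ p =
      ∑ i ∈ S, a i ^ p * (x ^ p) ^ i * (y ^ p) ^ (n - i) := by
  rw [sum_pow_char]
  refine sum_congr rfl fun i _ => ?_
  rw [mul_pow, mul_pow, pow_right_comm x, pow_right_comm y]

/-- The boundary form `σ - x₂^p` equals `1` along the curve `(M·V^p, M·W^p, M·τ(V, W) - 1)`. -/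
theorem boundary_form_eq_one (a b : ℕ → R) (hb : ∀ i, b i ^ p = a i) (M V W : R) :
    ∑ i ∈ Ioo 0 p, a i * (M * V ^ p) ^ i * (M * W ^ p) ^ (p - i) -
        (M * ∑ i ∈ Ioo 0 p, b i * V ^ i * W ^ (p - i) - 1) ^ p = 1 := by
  rw [sum_mul_pow_mul_pow_sub _ (fun i hi => (mem_Ioo.mp hi).2.le), sub_pow_char, mul_pow,
    one_pow, sum_mul_pow_mul_pow_sub_pow_char]
  simp only [hb]
  ring

end CharP

section Polynomial

variable {𝕜 : Type*} [Field 𝕜] (p : ℕ) [Fact p.Prime] [CharP 𝕜 p] (β₀ β₁ γ₀ γ₁ : 𝕜)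
  (M : 𝕜[X])

theorem linear_form_one_eq_neg_mul :
    C (γ₁ ^ p) * (M * (C β₀ + C β₁ * X) ^ p) - C (β₁ ^ p) * (M * (C γ₀ + C γ₁ * X) ^ p) =
      C (-(β₁ ^ p * γ₀ ^ p - β₀ ^ p * γ₁ ^ p)) * M := by
  rw [C_pow, C_pow, mul_sub_mul_pow_char,
    show C γ₁ * (C β₀ + C β₁ * X) - C β₁ * (C γ₀ + C γ₁ * X) = C (-(β₁ * γ₀ - β₀ * γ₁)) by
      simp only [map_neg, map_sub, map_mul]; ring,
    ← C_pow, neg_pow, neg_one_pow_char, sub_pow_char, mul_pow, mul_pow]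
  simp only [map_neg, map_sub, map_mul, map_pow, map_one]
  ring

theorem linear_form_zero_eq_mul_X_pow :
    C (γ₀ ^ p) * (M * (C β₀ + C β₁ * X) ^ p) - C (β₀ ^ p) * (M * (C γ₀ + C γ₁ * X) ^ p) =
      C (β₁ ^ p * γ₀ ^ p - β₀ ^ p * γ₁ ^ p) * M * X ^ p := by
  rw [C_pow, C_pow, mul_sub_mul_pow_char,
    show C γ₀ * (C β₀ + C β₁ * X) - C β₀ * (C γ₀ + C γ₁ * X) = C (β₁ * γ₀ - β₀ * γ₁) * X by
      simp only [map_sub, map_mul]; ring,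
    mul_pow, ← C_pow, sub_pow_char, mul_pow, mul_pow]
  ring

theorem prod_linear_form_sub_eq {m : ℕ} (α : Fin m → 𝕜) (π : 𝕜) :
    ∏ j, (C π * M * X ^ p - C (α j ^ p) * (C (-π) * M)) =
      (C π * M) ^ m * (∏ j, (X + C (α j))) ^ p := by
  have hfactor : ∀ j, C π * M * X ^ p - C (α j ^ p) * (C (-π) * M) =
      C π * M * (X + C (α j)) ^ p := fun j => by
    rw [add_pow_char, ← C_pow, map_neg]
    ring
  simp only [hfactor, prod_mul_distrib, prod_const, card_univ, Fintype.card_fin, prod_pow]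
  rw [mul_pow]

end Polynomial

/-- **Proposition 4.1, defining equation of the component 𝒜_{pd,d−p}(X).**
Let `p` be a prime, `𝕜` a (perfect) field of characteristic `p`, with `σ_i ∈ 𝕜` and
`p`-th roots `τ i` (so `τ i ^ p = σ_i`).  Let `m ≥ 0`, `d = m + p`, and fix
`α₁,…,α_m, β₀, β₁, γ₀, γ₁ ∈ 𝕜`.  With `M = ∏ (t + α_j)`, `V = β₀ + β₁t`, `W = γ₀ + γ₁t`,
`x₀ = M·V^p`, `x₁ = M·W^p`, `x₂ = M·σ^{1/p}(V,W) − 1`, `b_k = β_k^p`, `c_k = γ_k^p`,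
`π = b₁c₀ − b₀c₁`, `L_k = c_k·x₀ − b_k·x₁`, one has
`L₁^d = (−1)^d·π^p·(σ(x₀,x₁) − x₂^p)·∏_j (L₀ − α_j^p·L₁)` in `𝕜[t]`. -/
theorem defining_equation_of_A1_curve
    (p : ℕ) (hp : p.Prime) (𝕜 : Type*) [Field 𝕜] [CharP 𝕜 p]
    (s τ : ℕ → 𝕜) (hτ : ∀ i, τ i ^ p = s i)
    (m : ℕ) (α : Fin m → 𝕜) (β₀ β₁ γ₀ γ₁ : 𝕜)
    (M V W x₀ x₁ x₂ L₀ L₁ : Polynomial 𝕜) (b₀ b₁ c₀ c₁ π : 𝕜)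
    (hM : M = ∏ j, (X + C (α j)))
    (hV : V = C β₀ + C β₁ * X) (hW : W = C γ₀ + C γ₁ * X)
    (hx₀ : x₀ = M * V ^ p) (hx₁ : x₁ = M * W ^ p)
    (hx₂ : x₂ = M * (∑ i ∈ Ioo 0 p, C (τ i) * V ^ i * W ^ (p - i)) - 1)
    (hb₀ : b₀ = β₀ ^ p) (hb₁ : b₁ = β₁ ^ p) (hc₀ : c₀ = γ₀ ^ p) (hc₁ : c₁ = γ₁ ^ p)
    (hπ : π = b₁ * c₀ - b₀ * c₁)
    (hL₀ : L₀ = C c₀ * x₀ - C b₀ * x₁) (hL₁ : L₁ = C c₁ * x₀ - C b₁ * x₁) :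
    L₁ ^ (m + p) =
      C ((-1 : 𝕜) ^ (m + p) * π ^ p) *
        ((∑ i ∈ Ioo 0 p, C (s i) * x₀ ^ i * x₁ ^ (p - i)) - x₂ ^ p) *
        ∏ j, (L₀ - C (α j ^ p) * L₁) := by
  have := Fact.mk hp
  subst hb₀ hb₁ hc₀ hc₁
  have hL₁M : L₁ = C (-π) * M := by
    rw [hL₁, hx₀, hx₁, hV, hW, hπ, linear_form_one_eq_neg_mul]
  have hL₀M : L₀ = C π * M * X ^ p := by
    rw [hL₀, hx₀, hx₁, hV, hW, hπ, linear_form_zero_eq_mul_X_pow]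
  have hboundary : (∑ i ∈ Ioo 0 p, C (s i) * x₀ ^ i * x₁ ^ (p - i)) - x₂ ^ p = 1 :=
    hx₀ ▸ hx₁ ▸ hx₂ ▸ boundary_form_eq_one p _ _ (fun i => by rw [← C_pow, hτ]) M V W
  rw [hboundary, hL₀M, hL₁M, prod_linear_form_sub_eq, ← hM]
  simp only [map_mul, map_pow, map_neg, map_one]
  ring
end

section
/- (Lemma 4.5, gradient of Ψ.) In the polynomial ring R = 𝕜[x₀,x₁,x₂,b₀,b₁,c₀,c₁], the gradient ∇Ψ := (∂_{x₀}Ψ, ∂_{x₁}Ψ, ∂_{x₂}Ψ, ∂_{b₀}Ψ, ∂_{b₁}Ψ, ∂_{c₀}Ψ, ∂_{c₁}Ψ) satisfies ∇Ψ = D·∇L₁ − (−1)^d·π^p·𝓛·∇Δ − (−1)^d·π^p·E·Δ·∇L₀, where ∇L₁ = (c₁, −b₁, 0, 0, −x₁, 0, x₀), ∇Δ = (∂_{x₀}Δ, ∂_{x₁}Δ, 0, 0, 0, 0, 0), and ∇L₀ = (c₀, −b₀, 0, −x₁, 0, x₀, 0). -/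
open MvPolynomial Finset

noncomputable section

variable (𝕜 : Type*) [Field 𝕜]

/-- `L₀ = c₀x₀ − b₀x₁` in `R = 𝕜[x₀,x₁,x₂,b₀,b₁,c₀,c₁]`, where the variables
`x₀,x₁,x₂,b₀,b₁,c₀,c₁` are `X 0, X 1, X 2, X 3, X 4, X 5, X 6` respectively. -/
def L0 : MvPolynomial (Fin 7) 𝕜 := X 5 * X 0 - X 3 * X 1

/-- `L₁ = c₁x₀ − b₁x₁`. -/
def L1 : MvPolynomial (Fin 7) 𝕜 := X 6 * X 0 - X 4 * X 1

/-- `π = b₁c₀ − b₀c₁`. -/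
def piPoly : MvPolynomial (Fin 7) 𝕜 := X 4 * X 5 - X 3 * X 6

/-- `Δ = σ(x₀,x₁) − x₂^p` where `σ(A,B) = ∑_{i=1}^{p-1} σ_i A^i B^{p-i}`. -/
def Delta (p : ℕ) (s : ℕ → 𝕜) : MvPolynomial (Fin 7) 𝕜 :=
  (∑ i ∈ Ioo 0 p, C (s i) * X 0 ^ i * X 1 ^ (p - i)) - X 2 ^ p

/-- `𝓛 = L₀^m + ∑_{k=1}^{m-1} e_k L₀^{m-k} L₁^k`. -/
def calL (m : ℕ) (e : ℕ → 𝕜) : MvPolynomial (Fin 7) 𝕜 :=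
  L0 𝕜 ^ m + ∑ k ∈ Ioo 0 m, C (e k) * L0 𝕜 ^ (m - k) * L1 𝕜 ^ k

/-- `Ψ = L₁^d − (−1)^d π^p Δ 𝓛` with `d = m + p`. -/
def Psi (p m : ℕ) (s e : ℕ → 𝕜) : MvPolynomial (Fin 7) 𝕜 :=
  L1 𝕜 ^ (m + p) - C ((-1 : 𝕜) ^ (m + p)) * piPoly 𝕜 ^ p * Delta 𝕜 p s * calL 𝕜 m e

/-- `D = d·L₁^{d-1} − (−1)^d π^p Δ·∑_{k=1}^{m-1} k e_k L₀^{m-k} L₁^{k-1}` with `d = m + p`. -/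
def Dpoly (p m : ℕ) (s e : ℕ → 𝕜) : MvPolynomial (Fin 7) 𝕜 :=
  C (((m + p : ℕ) : 𝕜)) * L1 𝕜 ^ (m + p - 1) -
    C ((-1 : 𝕜) ^ (m + p)) * piPoly 𝕜 ^ p * Delta 𝕜 p s *
      ∑ k ∈ Ioo 0 m, C ((k : 𝕜) * e k) * L0 𝕜 ^ (m - k) * L1 𝕜 ^ (k - 1)

/-- `E = m·L₀^{m-1} + ∑_{k=1}^{m-1} (m−k) e_k L₀^{m-k-1} L₁^k`. -/
def Epoly (m : ℕ) (e : ℕ → 𝕜) : MvPolynomial (Fin 7) 𝕜 :=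
  C ((m : 𝕜)) * L0 𝕜 ^ (m - 1) +
    ∑ k ∈ Ioo 0 m, C (((m - k : ℕ) : 𝕜) * e k) * L0 𝕜 ^ (m - k - 1) * L1 𝕜 ^ k

namespace Derivation

variable {R A : Type*} [CommSemiring R] [CommSemiring A] [Algebra R A] (D : Derivation R A A)

theorem map_pow_char (p : ℕ) [CharP A p] (a : A) : D (a ^ p) = 0 := by
  rw [leibniz_pow, ← Nat.cast_smul_eq_nsmul A, CharP.cast_eq_zero, zero_smul]

theorem leibniz_pow_mul_pow (a b : A) (j k : ℕ) :
    D (a ^ j * b ^ k) = j * a ^ (j - 1) * b ^ k * D a + k * a ^ j * b ^ (k - 1) * D b := by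
  simp only [leibniz, leibniz_pow, smul_eq_mul, nsmul_eq_mul]
  ring

end Derivation

variable {𝕜}

section

variable (D : Derivation 𝕜 (MvPolynomial (Fin 7) 𝕜) (MvPolynomial (Fin 7) 𝕜))

theorem derivation_calL (m : ℕ) (e : ℕ → 𝕜) :
    D (calL 𝕜 m e) =
      Epoly 𝕜 m e * D (L0 𝕜) +
        (∑ k ∈ Ioo 0 m, C ((k : 𝕜) * e k) * L0 𝕜 ^ (m - k) * L1 𝕜 ^ (k - 1)) * D (L1 𝕜) := by
  have term : ∀ k ∈ Ioo 0 m, D (C (e k) * L0 𝕜 ^ (m - k) * L1 𝕜 ^ k) =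
      C (((m - k : ℕ) : 𝕜) * e k) * L0 𝕜 ^ (m - k - 1) * L1 𝕜 ^ k * D (L0 𝕜) +
        C ((k : 𝕜) * e k) * L0 𝕜 ^ (m - k) * L1 𝕜 ^ (k - 1) * D (L1 𝕜) := by
    intro k _
    rw [mul_assoc, C_mul', D.map_smul, D.leibniz_pow_mul_pow, ← C_mul']
    simp only [map_mul, map_natCast]
    ring
  rw [calL, map_add, map_sum, sum_congr rfl term, sum_add_distrib, ← sum_mul, ← sum_mul,
    D.leibniz_pow, Epoly, smul_eq_mul, nsmul_eq_mul, map_natCast]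
  ring

-- `π ^ p` is a `p`-th power, hence a constant for every derivation in characteristic `p`.
theorem derivation_Psi (p : ℕ) [CharP 𝕜 p] (m : ℕ) (s e : ℕ → 𝕜) :
    D (Psi 𝕜 p m s e) =
      Dpoly 𝕜 p m s e * D (L1 𝕜) -
        C ((-1 : 𝕜) ^ (m + p)) * piPoly 𝕜 ^ p * calL 𝕜 m e * D (Delta 𝕜 p s) -
        C ((-1 : 𝕜) ^ (m + p)) * piPoly 𝕜 ^ p * Epoly 𝕜 m e * Delta 𝕜 p s * D (L0 𝕜) := by
  have hC : ∀ c : 𝕜, D (C c) = 0 := D.map_algebraMap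
  have hπ : D (piPoly 𝕜 ^ p) = 0 := D.map_pow_char p _
  simp only [Psi, Dpoly, map_sub, Derivation.leibniz, hC, hπ, derivation_calL, D.leibniz_pow,
    smul_eq_mul, nsmul_eq_mul, map_natCast]
  ring

end

theorem pderiv_L0 (i : Fin 7) : pderiv i (L0 𝕜) = ![X 5, -(X 3), 0, -(X 1), 0, X 0, 0] i := by
  fin_cases i <;> simp [L0, pderiv_X]

theorem pderiv_L1 (i : Fin 7) : pderiv i (L1 𝕜) = ![X 6, -(X 4), 0, 0, -(X 1), 0, X 0] i := by
  fin_cases i <;> simp [L1, pderiv_X]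

theorem pderiv_Delta (p : ℕ) [CharP 𝕜 p] (s : ℕ → 𝕜) (i : Fin 7) :
    pderiv i (Delta 𝕜 p s) =
      ![pderiv (0 : Fin 7) (Delta 𝕜 p s), pderiv (1 : Fin 7) (Delta 𝕜 p s), 0, 0, 0, 0, 0] i := by
  fin_cases i <;> simp [Delta, pderiv_X, (pderiv _).map_pow_char p]

theorem gradient_Psi_general
    (p : ℕ) [CharP 𝕜 p] (m : ℕ) (s e : ℕ → 𝕜) (i : Fin 7) :
    pderiv i (Psi 𝕜 p m s e) =
      Dpoly 𝕜 p m s e * ![X 6, -(X 4), 0, 0, -(X 1), 0, X 0] i -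
        C ((-1 : 𝕜) ^ (m + p)) * piPoly 𝕜 ^ p * calL 𝕜 m e *
          ![pderiv (0 : Fin 7) (Delta 𝕜 p s), pderiv (1 : Fin 7) (Delta 𝕜 p s),
            0, 0, 0, 0, 0] i -
        C ((-1 : 𝕜) ^ (m + p)) * piPoly 𝕜 ^ p * Epoly 𝕜 m e * Delta 𝕜 p s *
          ![X 5, -(X 3), 0, -(X 1), 0, X 0, 0] i := by
  rw [derivation_Psi, pderiv_L0, pderiv_L1, pderiv_Delta]

/-- **Lemma 4.5, gradient of Ψ.**  In `R = 𝕜[x₀,x₁,x₂,b₀,b₁,c₀,c₁]`,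
`∇Ψ = D·∇L₁ − (−1)^d·π^p·𝓛·∇Δ − (−1)^d·π^p·E·Δ·∇L₀`, where
`∇L₁ = (c₁, −b₁, 0, 0, −x₁, 0, x₀)`, `∇Δ = (∂_{x₀}Δ, ∂_{x₁}Δ, 0, 0, 0, 0, 0)`, and
`∇L₀ = (c₀, −b₀, 0, −x₁, 0, x₀, 0)`. -/
theorem gradient_Psi
    (p : ℕ) (hp : p.Prime) [CharP 𝕜 p] (m : ℕ) (s e : ℕ → 𝕜) (i : Fin 7) :
    pderiv i (Psi 𝕜 p m s e) =
      Dpoly 𝕜 p m s e * ![X 6, -(X 4), 0, 0, -(X 1), 0, X 0] i -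
        C ((-1 : 𝕜) ^ (m + p)) * piPoly 𝕜 ^ p * calL 𝕜 m e *
          ![pderiv (0 : Fin 7) (Delta 𝕜 p s), pderiv (1 : Fin 7) (Delta 𝕜 p s),
            0, 0, 0, 0, 0] i -
        C ((-1 : 𝕜) ^ (m + p)) * piPoly 𝕜 ^ p * Epoly 𝕜 m e * Delta 𝕜 p s *
          ![X 5, -(X 3), 0, -(X 1), 0, X 0, 0] i :=
  gradient_Psi_general p m s e i

end
end

section
/- (Lemma 4.6(2).) Every point s ∈ 𝕜⁷ (with coordinates x₀, x₁, x₂, b₀, b₁, c₀, c₁) satisfying Ψ(s) = 0 and π(s) = 0 is a singular point of the hypersurface Ψ = 0, i.e. all seven partial derivatives of Ψ vanish at s: ∇Ψ(s) = 0. -/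
/-!
On `π = 0` the equation `Ψ = 0` reduces to `L₁^d = 0`, so `L₁` vanishes there too. The gradient
of `L₁^d` is `d L₁^(d-1) ∇L₁`, which vanishes where `L₁` does because `d ≥ p ≥ 2`. In
characteristic `p` the polynomial `π^p` has zero gradient, so the gradient of `π^p · Δ 𝓛` is
`π^p ∇(Δ 𝓛)`, which vanishes where `π` does.
-/

open MvPolynomial Finset

noncomputable section

variable (𝕜 : Type*) [Field 𝕜]

section

variable {σ R : Type*} [CommSemiring R] {i : σ} {v : σ → R}

theorem MvPolynomial.eval_pderiv_pow_eq_zero {f : MvPolynomial σ R} {n : ℕ} (hn : 2 ≤ n)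
    (hf : eval v f = 0) : eval v (pderiv i (f ^ n)) = 0 := by
  rw [pderiv_pow, map_mul, map_mul, map_pow, hf, zero_pow (by omega), mul_zero, zero_mul]

theorem MvPolynomial.pderiv_pow_char (p : ℕ) [CharP R p] (f : MvPolynomial σ R) :
    pderiv i (f ^ p) = 0 := by
  rw [pderiv_pow, CharP.cast_eq_zero, zero_mul, zero_mul]

theorem MvPolynomial.eval_pderiv_mul_eq_zero_of_pderiv_eq_zero {a : MvPolynomial σ R}
    (g : MvPolynomial σ R) (ha : pderiv i a = 0) (hv : eval v a = 0) :
    eval v (pderiv i (a * g)) = 0 := by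
  rw [pderiv_mul, ha, zero_mul, zero_add, map_mul, hv, zero_mul]

end

theorem Psi_eq_L1_pow_sub_piPoly_pow_mul (p m : ℕ) (s e : ℕ → 𝕜) :
    Psi 𝕜 p m s e =
      L1 𝕜 ^ (m + p) - piPoly 𝕜 ^ p * (C ((-1 : 𝕜) ^ (m + p)) * Delta 𝕜 p s * calL 𝕜 m e) := by
  rw [Psi]
  ring

theorem eval_L1_eq_zero_of_eval_Psi_eq_zero {p : ℕ} (hp : p ≠ 0) (m : ℕ) (s e : ℕ → 𝕜)
    {v : Fin 7 → 𝕜} (hΨ : eval v (Psi 𝕜 p m s e) = 0) (hπ : eval v (piPoly 𝕜) = 0) :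
    eval v (L1 𝕜) = 0 := by
  rw [Psi_eq_L1_pow_sub_piPoly_pow_mul, map_sub, map_mul, map_pow, map_pow, hπ, zero_pow hp,
    zero_mul, sub_zero] at hΨ
  exact pow_eq_zero_iff (by omega) |>.mp hΨ

/-- **Lemma 4.6(2).**  Every point `s ∈ 𝕜⁷` with `Ψ(s) = 0` and `π(s) = 0`
is a singular point of the hypersurface `Ψ = 0`: all seven partial derivatives of `Ψ`
vanish at `s`. -/
theorem singular_on_pi_zero_locus
    (p : ℕ) (hp : p.Prime) [CharP 𝕜 p] (m : ℕ) (s e : ℕ → 𝕜)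
    (v : Fin 7 → 𝕜)
    (hΨ : eval v (Psi 𝕜 p m s e) = 0)
    (hπ : eval v (piPoly 𝕜) = 0) :
    ∀ i : Fin 7, eval v (pderiv i (Psi 𝕜 p m s e)) = 0 := by
  intro i
  have hL1 := eval_L1_eq_zero_of_eval_Psi_eq_zero 𝕜 hp.ne_zero m s e hΨ hπ
  have hπp : eval v (piPoly 𝕜 ^ p) = 0 := by rw [map_pow, hπ, zero_pow hp.ne_zero]
  rw [Psi_eq_L1_pow_sub_piPoly_pow_mul, map_sub, map_sub,
    eval_pderiv_pow_eq_zero (hp.two_le.trans (Nat.le_add_left p m)) hL1,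
    eval_pderiv_mul_eq_zero_of_pderiv_eq_zero _ (pderiv_pow_char p _) hπp, sub_zero]

end
end

section
/- (Lemma 4.6(1).) Every point s ∈ 𝕜⁷ (with coordinates x₀, x₁, x₂, b₀, b₁, c₀, c₁) satisfying Ψ(s) = 0, Δ(s) = 0, ∂_{x₀}Δ(s) = 0 and ∂_{x₁}Δ(s) = 0 (i.e. a point of the hypersurface Ψ = 0 whose image in ℙ² is a singular point of the curve Δ_X) is a singular point of the hypersurface Ψ = 0: all seven partial derivatives of Ψ vanish at s. -/
open MvPolynomial Finset

noncomputable section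

variable (𝕜 : Type*) [Field 𝕜]

/-! At a singular point of the curve `Δ = 0`, `Δ` vanishes to second order, hence so does its
multiple `π^p Δ 𝓛`. There `Ψ = L₁^d`, so `L₁` vanishes, and `L₁^d` vanishes to second order
because `d ≥ 2`. The characteristic enters only through `∂_{x₂}Δ = -p x₂^(p-1) = 0`. -/

section SingularPoint

variable {σ R : Type*} [CommRing R]

def IsSingularPoint (f : MvPolynomial σ R) (v : σ → R) : Prop :=
  eval v f = 0 ∧ ∀ i, eval v (pderiv i f) = 0

variable {f g : MvPolynomial σ R} {v : σ → R}

theorem IsSingularPoint.mul_right (hf : IsSingularPoint f v) (g : MvPolynomial σ R) :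
    IsSingularPoint (f * g) v :=
  ⟨by simp [hf.1], fun i => by simp [hf.1, hf.2 i]⟩

theorem IsSingularPoint.mul_left (hg : IsSingularPoint g v) (f : MvPolynomial σ R) :
    IsSingularPoint (f * g) v :=
  mul_comm g f ▸ hg.mul_right f

theorem IsSingularPoint.sub (hf : IsSingularPoint f v) (hg : IsSingularPoint g v) :
    IsSingularPoint (f - g) v :=
  ⟨by simp [hf.1, hg.1], fun i => by simp [hf.2 i, hg.2 i]⟩

theorem isSingularPoint_pow {n : ℕ} (hf : eval v f = 0) (hn : 2 ≤ n) :
    IsSingularPoint (f ^ n) v :=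
  ⟨by simp [hf, show n ≠ 0 by omega], fun i => by simp [hf, show n - 1 ≠ 0 by omega]⟩

theorem pderiv_pow_char_eq_zero (p : ℕ) [CharP R p] (i : σ) (f : MvPolynomial σ R) :
    pderiv i (f ^ p) = 0 := by
  rw [pderiv_pow, CharP.cast_eq_zero, zero_mul, zero_mul]

end SingularPoint

theorem pderiv_Delta_eq_zero (p : ℕ) [CharP 𝕜 p] (s : ℕ → 𝕜) {i : Fin 7} (h0 : i ≠ 0)
    (h1 : i ≠ 1) : pderiv i (Delta 𝕜 p s) = 0 := by
  simp [Delta, pderiv_X_of_ne h0.symm, pderiv_X_of_ne h1.symm, pderiv_pow_char_eq_zero p]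

theorem isSingularPoint_Delta (p : ℕ) [CharP 𝕜 p] (s : ℕ → 𝕜) {v : Fin 7 → 𝕜}
    (hΔ : eval v (Delta 𝕜 p s) = 0) (hΔ₀ : eval v (pderiv 0 (Delta 𝕜 p s)) = 0)
    (hΔ₁ : eval v (pderiv 1 (Delta 𝕜 p s)) = 0) : IsSingularPoint (Delta 𝕜 p s) v := by
  refine ⟨hΔ, fun i => ?_⟩
  by_cases h0 : i = 0
  · exact h0 ▸ hΔ₀
  by_cases h1 : i = 1
  · exact h1 ▸ hΔ₁
  simp [pderiv_Delta_eq_zero 𝕜 p s h0 h1]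

/-- **Lemma 4.6(1).**  Every point `s ∈ 𝕜⁷` on the hypersurface `Ψ = 0`
whose image in `ℙ²` is a singular point of the curve `Δ_X` (i.e. `Δ(s) = 0`,
`∂_{x₀}Δ(s) = 0`, `∂_{x₁}Δ(s) = 0`) is a singular point of the hypersurface `Ψ = 0`:
all seven partial derivatives of `Ψ` vanish at `s`. -/
theorem singular_over_singular_points_of_boundary
    (p : ℕ) (hp : p.Prime) [CharP 𝕜 p] (m : ℕ) (s e : ℕ → 𝕜)
    (v : Fin 7 → 𝕜)
    (hΨ : eval v (Psi 𝕜 p m s e) = 0)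
    (hΔ : eval v (Delta 𝕜 p s) = 0)
    (hΔ₀ : eval v (pderiv (0 : Fin 7) (Delta 𝕜 p s)) = 0)
    (hΔ₁ : eval v (pderiv (1 : Fin 7) (Delta 𝕜 p s)) = 0) :
    ∀ i : Fin 7, eval v (pderiv i (Psi 𝕜 p m s e)) = 0 := by
  have hd : 2 ≤ m + p := le_add_left hp.two_le
  have hL1 : eval v (L1 𝕜) = 0 := by
    simpa [Psi, hΔ, hp.ne_zero] using hΨ
  have hΔsing := isSingularPoint_Delta 𝕜 p s hΔ hΔ₀ hΔ₁
  exact ((isSingularPoint_pow hL1 hd).sub ((hΔsing.mul_left _).mul_right _)).2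

end
end

section
/- (Smoothness of each fiber at its marked point; step in the proof of Lemma 4.8.) Let s ∈ 𝕜⁷ (with coordinates x₀, x₁, x₂, b₀, b₁, c₀, c₁) satisfy L₁(s) = 0 and Δ(s) = 0, and suppose π(s) ≠ 0, (x₀(s), x₁(s)) ≠ (0,0), and (∂_{x₀}Δ(s), ∂_{x₁}Δ(s)) ≠ (0,0) (i.e. the image of s in ℙ² is not a singular point of the curve Δ_X). Then (∂_{x₀}Ψ(s), ∂_{x₁}Ψ(s)) ≠ (0,0); in particular, the plane curve cut out by Ψ (with the b- and c-coordinates of s fixed) is smooth at the point of ℙ² determined by s. -/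
open MvPolynomial Finset

noncomputable section

variable (𝕜 : Type*) [Field 𝕜]

/-!
At the marked point `L₁` vanishes to order `d ≥ 2` and `Δ` vanishes, so by the Leibniz rule
`∇Ψ = −(−1)^d π^p 𝓛 ∇Δ` there, and `𝓛 = L₀^m` there. Since `(L₀, L₁)` is obtained from
`(x₀, x₁)` by a linear map of determinant `−π ≠ 0`, `L₀` does not vanish, so `∇Ψ` is a nonzero
multiple of `∇Δ`.
-/

section PDeriv

variable {σ R : Type*} [CommSemiring R] {v : σ → R} {i : σ} {f g : MvPolynomial σ R}

theorem eval_pderiv_mul_of_eval_eq_zero (hg : eval v g = 0) :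
    eval v (pderiv i (f * g)) = eval v f * eval v (pderiv i g) := by
  simp [hg]

theorem eval_pderiv_pow_of_eval_eq_zero {n : ℕ} (hf : eval v f = 0) (hn : 2 ≤ n) :
    eval v (pderiv i (f ^ n)) = 0 := by
  simp [hf, zero_pow (by omega : n - 1 ≠ 0)]

end PDeriv

section MarkedPoint

variable {𝕜} {v : Fin 7 → 𝕜}

theorem eval_L0_ne_zero (hL₁ : eval v (L1 𝕜) = 0) (hπ : eval v (piPoly 𝕜) ≠ 0)
    (hx : ¬ (v 0 = 0 ∧ v 1 = 0)) : eval v (L0 𝕜) ≠ 0 := by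
  intro hL₀
  simp only [L0, L1, piPoly, map_sub, map_mul, eval_X] at hL₀ hL₁ hπ
  refine hx ⟨mul_left_cancel₀ hπ ?_, mul_left_cancel₀ hπ ?_⟩
  · linear_combination v 4 * hL₀ - v 3 * hL₁
  · linear_combination v 6 * hL₀ - v 5 * hL₁

theorem eval_calL_of_eval_L1_eq_zero (m : ℕ) (e : ℕ → 𝕜) (hL₁ : eval v (L1 𝕜) = 0) :
    eval v (calL 𝕜 m e) = eval v (L0 𝕜) ^ m := by
  rw [calL, map_add, map_pow, map_sum, Finset.sum_eq_zero, add_zero]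
  intro k hk
  rw [map_mul, map_pow, hL₁, zero_pow (Finset.mem_Ioo.1 hk).1.ne', mul_zero]

theorem eval_pderiv_Psi {p m : ℕ} {s e : ℕ → 𝕜} (hd : 2 ≤ m + p) (hL₁ : eval v (L1 𝕜) = 0)
    (hΔ : eval v (Delta 𝕜 p s) = 0) (i : Fin 7) :
    eval v (pderiv i (Psi 𝕜 p m s e)) =
      -((-1 : 𝕜) ^ (m + p) * eval v (piPoly 𝕜) ^ p * eval v (L0 𝕜) ^ m) *
        eval v (pderiv i (Delta 𝕜 p s)) := by
  have hΨ : Psi 𝕜 p m s e =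
      L1 𝕜 ^ (m + p) - C ((-1 : 𝕜) ^ (m + p)) * piPoly 𝕜 ^ p * calL 𝕜 m e * Delta 𝕜 p s := by
    rw [Psi]; ring
  rw [hΨ, map_sub, map_sub, eval_pderiv_pow_of_eval_eq_zero hL₁ hd,
    eval_pderiv_mul_of_eval_eq_zero hΔ]
  simp only [map_mul, map_pow, eval_C, eval_calL_of_eval_L1_eq_zero m e hL₁]
  ring

end MarkedPoint

/-- **smoothness of each fiber at its marked point; Lemma 4.8.**
Let `s ∈ 𝕜⁷` satisfy `L₁(s) = 0` and `Δ(s) = 0`, with `π(s) ≠ 0`,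
`(x₀(s), x₁(s)) ≠ (0,0)` and `(∂_{x₀}Δ(s), ∂_{x₁}Δ(s)) ≠ (0,0)`.
Then `(∂_{x₀}Ψ(s), ∂_{x₁}Ψ(s)) ≠ (0,0)`; in particular the plane curve cut out by `Ψ`
(with the `b`- and `c`-coordinates of `s` fixed) is smooth at the point of `ℙ²`
determined by `s`. -/
theorem fiber_smooth_at_marked_point
    (p : ℕ) (hp : p.Prime) (m : ℕ) (s e : ℕ → 𝕜)
    (v : Fin 7 → 𝕜)
    (hL₁ : eval v (L1 𝕜) = 0)
    (hΔ : eval v (Delta 𝕜 p s) = 0)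
    (hπ : eval v (piPoly 𝕜) ≠ 0)
    (hstr : ¬ (v 0 = 0 ∧ v 1 = 0))
    (hΔsm : ¬ (eval v (pderiv (0 : Fin 7) (Delta 𝕜 p s)) = 0 ∧
               eval v (pderiv (1 : Fin 7) (Delta 𝕜 p s)) = 0)) :
    ¬ (eval v (pderiv (0 : Fin 7) (Psi 𝕜 p m s e)) = 0 ∧
       eval v (pderiv (1 : Fin 7) (Psi 𝕜 p m s e)) = 0) := by
  have hc : (-1 : 𝕜) ^ (m + p) * eval v (piPoly 𝕜) ^ p * eval v (L0 𝕜) ^ m ≠ 0 :=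
    mul_ne_zero (mul_ne_zero (pow_ne_zero _ (by norm_num)) (pow_ne_zero _ hπ))
      (pow_ne_zero _ (eval_L0_ne_zero hL₁ hπ hstr))
  have hd : 2 ≤ m + p := le_add_left hp.two_le
  rintro ⟨h₀, h₁⟩
  rw [eval_pderiv_Psi hd hL₁ hΔ, mul_eq_zero, neg_eq_zero] at h₀ h₁
  exact hΔsm ⟨h₀.resolve_left hc, h₁.resolve_left hc⟩

end
end
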